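/- Let 1 ≤ j ≤ n and let T¹ and T² be two L_j partial tour subgraphs such that a_j has the same degree parity (zero, odd, or even positive) in both, b_j has the same degree parity in both, and, after deleting all vertices of degree zero, either both have no connected component, or both have a single connected component containing at least one of a_j and b_j, or both have two connected components with a_j in one and b_j in the other. Then T¹ and T² are equivalent: for every subgraph C of G − L_j, T¹ ∪ C is a tour subgraph of G if and only if T² ∪ C is a tour subgraph of G. -/

import Mathlib

/-- Degree parity class of a vertex: degree zero, odd degree, or even positive degree. -/
inductive DegClass : Type
  | zero : DegClass
  | odd : DegClass
  | evenPos : DegClass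
deriving DecidableEq

/-- The parity class of a natural number (a degree). -/
def degClass (d : ℕ) : DegClass :=
  if d = 0 then .zero else if d % 2 = 1 then .odd else .evenPos

/-- Names of the six vertical edge configurations. -/
inductive VCName : Type
  | onepass : VCName
  | top : VCName
  | bottom : VCName
  | gap : VCName
  | twopass : VCName
  | none : VCName
deriving DecidableEq

/-- Names of the five horizontal edge configurations. -/
inductive HCName : Type
  | h11 : HCName
  | h20 : HCName
  | h02 : HCName
  | h22 : HCName
  | h00 : HCName
deriving DecidableEq

/-- Number of copies of the back cross-aisle edge `a_j a_{j+1}` in a horizontal configuration. -/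
def hcA : HCName → ℕ
  | .h11 => 1
  | .h20 => 2
  | .h02 => 0
  | .h22 => 2
  | .h00 => 0

/-- Number of copies of the front cross-aisle edge `b_j b_{j+1}` in a horizontal configuration. -/
def hcB : HCName → ℕ
  | .h11 => 1
  | .h20 => 0
  | .h02 => 2
  | .h22 => 2
  | .h00 => 0

/-- The seven equivalence classes, as triples (parity of `a_j`, parity of `b_j`, #components). -/
def cUU1C : DegClass × DegClass × ℕ := (.odd, .odd, 1)
def c0E1C : DegClass × DegClass × ℕ := (.zero, .evenPos, 1)
def cE01C : DegClass × DegClass × ℕ := (.evenPos, .zero, 1)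
def cEE1C : DegClass × DegClass × ℕ := (.evenPos, .evenPos, 1)
def cEE2C : DegClass × DegClass × ℕ := (.evenPos, .evenPos, 2)
def c000C : DegClass × DegClass × ℕ := (.zero, .zero, 0)
def c001C : DegClass × DegClass × ℕ := (.zero, .zero, 1)

/-- A single-block parallel-aisle warehouse in the sense of Ratliff and Rosenthal:
`n ≥ 1` vertical pick aisles, two horizontal cross-aisles, `picks j` pick vertices
strictly inside aisle `j`, nonnegative edge lengths, and a depot located at some
cross-aisle vertex `a_j` (if `depotTop`) or `b_j`. -/
structure Warehouse where
  n : ℕ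
  npos : 1 ≤ n
  picks : Fin n → ℕ
  vlen : (j : Fin n) → Fin (picks j + 1) → ℝ
  hlenA : Fin (n - 1) → ℝ
  hlenB : Fin (n - 1) → ℝ
  vlen_nonneg : ∀ j i, 0 ≤ vlen j i
  hlenA_nonneg : ∀ k, 0 ≤ hlenA k
  hlenB_nonneg : ∀ k, 0 ≤ hlenB k
  depotAisle : Fin n
  depotTop : Bool

namespace Warehouse

variable (W : Warehouse)

/-- Vertices of the warehouse graph: in aisle `j`, position `0` is the back cross-aisle
vertex `a_j`, position `picks j + 1` is the front cross-aisle vertex `b_j`, and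
positions `1, …, picks j` are the pick vertices of aisle `j`. -/
def V : Type := Σ j : Fin W.n, Fin (W.picks j + 2)

instance : DecidableEq W.V :=
  inferInstanceAs (DecidableEq (Σ j : Fin W.n, Fin (W.picks j + 2)))

instance : Fintype W.V :=
  inferInstanceAs (Fintype (Σ j : Fin W.n, Fin (W.picks j + 2)))

/-- The back cross-aisle vertex `a_j`. -/
def aV (j : Fin W.n) : W.V := ⟨j, 0⟩

/-- The front cross-aisle vertex `b_j`. -/
def bV (j : Fin W.n) : W.V := ⟨j, Fin.last (W.picks j + 1)⟩

/-- The depot vertex `v₀`. -/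
def depot : W.V := if W.depotTop then W.aV W.depotAisle else W.bV W.depotAisle

/-- `v` is a pick vertex, i.e. a vertex strictly inside an aisle. -/
def IsPick (v : W.V) : Prop := 0 < v.2.val ∧ v.2.val < W.picks v.1 + 1

/-- `v` is a required vertex, i.e. a member of `P` (a pick vertex or the depot). -/
def Required (v : W.V) : Prop := W.IsPick v ∨ v = W.depot

/-- Edges of the warehouse graph: a vertical edge `⟨j, i⟩` joins positions `i` and
`i+1` of aisle `j`; horizontal edges `inr (inl k)` join `a_k a_{k+1}` and
`inr (inr k)` join `b_k b_{k+1}`. -/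
def E : Type := (Σ j : Fin W.n, Fin (W.picks j + 1)) ⊕ (Fin (W.n - 1) ⊕ Fin (W.n - 1))

instance : DecidableEq W.E :=
  inferInstanceAs (DecidableEq ((Σ j : Fin W.n, Fin (W.picks j + 1)) ⊕ (Fin (W.n - 1) ⊕ Fin (W.n - 1))))

instance : Fintype W.E :=
  inferInstanceAs (Fintype ((Σ j : Fin W.n, Fin (W.picks j + 1)) ⊕ (Fin (W.n - 1) ⊕ Fin (W.n - 1))))

/-- The left aisle of a horizontal edge index. -/
def leftAisle (k : Fin (W.n - 1)) : Fin W.n := ⟨k.val, by have := k.isLt; omega⟩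

/-- The right aisle of a horizontal edge index. -/
def rightAisle (k : Fin (W.n - 1)) : Fin W.n := ⟨k.val + 1, by have := k.isLt; omega⟩

/-- Endpoints of an edge. -/
def ends : W.E → W.V × W.V
  | .inl ⟨j, i⟩ => (⟨j, i.castSucc⟩, ⟨j, i.succ⟩)
  | .inr (.inl k) => (W.aV (W.leftAisle k), W.aV (W.rightAisle k))
  | .inr (.inr k) => (W.bV (W.leftAisle k), W.bV (W.rightAisle k))

/-- Length of an edge. -/
def elen : W.E → ℝ
  | .inl ⟨j, i⟩ => W.vlen j i
  | .inr (.inl k) => W.hlenA k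
  | .inr (.inr k) => W.hlenB k

/-- A subgraph of `G` is a multiplicity function taking each edge with multiplicity at most 2. -/
def IsSub (T : W.E → ℕ) : Prop := ∀ e, T e ≤ 2

/-- Degree of a vertex in a subgraph, counting edges with multiplicity. -/
def deg (T : W.E → ℕ) (v : W.V) : ℕ :=
  ∑ e : W.E, T e * ((if (W.ends e).1 = v then 1 else 0) + (if (W.ends e).2 = v then 1 else 0))

/-- Total length of a subgraph, counting edges with multiplicity. -/
def length (T : W.E → ℕ) : ℝ := ∑ e : W.E, (T e : ℝ) * W.elen e

/-- Source of a directed traversal step. -/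
def stepSrc (s : W.E × Bool) : W.V := if s.2 then (W.ends s.1).1 else (W.ends s.1).2

/-- Destination of a directed traversal step. -/
def stepDst (s : W.E × Bool) : W.V := if s.2 then (W.ends s.1).2 else (W.ends s.1).1

/-- A list of directed steps is a closed walk. -/
def IsClosedWalk (l : List (W.E × Bool)) : Prop :=
  l.Chain' (fun s t => W.stepDst s = W.stepSrc t) ∧
  ∀ s ∈ l.head?, ∀ t ∈ l.getLast?, W.stepDst t = W.stepSrc s

/-- `T` is a tour subgraph: every required vertex has positive degree and there is a
closed walk traversing every edge of `T`, counted with multiplicity, exactly once. -/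
def IsTour (T : W.E → ℕ) : Prop :=
  W.IsSub T ∧ (∀ v, W.Required v → 0 < W.deg T v) ∧
  ∃ l : List (W.E × Bool), W.IsClosedWalk l ∧ ∀ e : W.E, (l.map Prod.fst).count e = T e

/-- `T` is an `L` partial tour subgraph: `T` is a subgraph supported on `L` and there is a
subgraph `C` of `G − L` such that `T ∪ C` is a tour subgraph of `G`. -/
def IsPTS (L : Set W.E) (T : W.E → ℕ) : Prop :=
  W.IsSub T ∧ (∀ e ∉ L, T e = 0) ∧
  ∃ C : W.E → ℕ, W.IsSub C ∧ (∀ e ∈ L, C e = 0) ∧ W.IsTour (fun e => T e + C e)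

/-- Two `L` PTSs are equivalent: any completion of one is a completion of the other. -/
def EquivPTS (L : Set W.E) (T₁ T₂ : W.E → ℕ) : Prop :=
  ∀ C : W.E → ℕ, W.IsSub C → (∀ e ∈ L, C e = 0) →
    (W.IsTour (fun e => T₁ e + C e) ↔ W.IsTour (fun e => T₂ e + C e))

/-- The edge set containing the vertical edges of the (0-indexed) aisles `< vmax` and the
horizontal edges with (0-indexed) index `< hmax`.  Thus, in paper (1-indexed) notation,
`L_j = edgesUpTo j (j-1)`, `L_j^- = edgesUpTo (j-1) (j-1)` and `G = edgesUpTo n (n-1)`. -/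
def edgesUpTo (vmax hmax : ℕ) : Set W.E := fun e =>
  match e with
  | .inl ⟨i, _⟩ => i.val < vmax
  | .inr (.inl k) => k.val < hmax
  | .inr (.inr k) => k.val < hmax

/-- The simple graph on the vertices of `G` induced by the edges of positive multiplicity. -/
def sgraph (T : W.E → ℕ) : SimpleGraph W.V where
  Adj v w := v ≠ w ∧ ∃ e, 0 < T e ∧
    (((W.ends e).1 = v ∧ (W.ends e).2 = w) ∨ ((W.ends e).1 = w ∧ (W.ends e).2 = v))
  symm := by
    constructor
    intro v w hvw
    obtain ⟨hne, e, he, hor⟩ := hvw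
    exact ⟨hne.symm, e, he, hor.symm⟩
  loopless := by constructor; intro v h; exact h.1 rfl

/-- Number of connected components of a subgraph after deleting all vertices of degree zero. -/
noncomputable def numComp (T : W.E → ℕ) : ℕ :=
  Nat.card ((W.sgraph T).induce {v : W.V | 0 < W.deg T v}).ConnectedComponent

/-- `v` and `w` both have positive degree but lie in different connected components of `T`. -/
def SepComp (T : W.E → ℕ) (v w : W.V) : Prop :=
  0 < W.deg T v ∧ 0 < W.deg T w ∧ ¬ (W.sgraph T).Reachable v w

/-- The equivalence class of a subgraph relative to the cross-aisle vertices of aisle `j`: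
the degree parities of `a_j` and `b_j` and the number of nonempty connected components. -/
noncomputable def classOf (T : W.E → ℕ) (j : Fin W.n) : DegClass × DegClass × ℕ :=
  (degClass (W.deg T (W.aV j)), degClass (W.deg T (W.bV j)), W.numComp T)

theorem exists_gapIdx (j : Fin W.n) :
    ∃ g : Fin (W.picks j + 1), ∀ i, W.vlen j i ≤ W.vlen j g := by
  obtain ⟨g, -, hg⟩ :=
    Finset.exists_max_image (Finset.univ : Finset (Fin (W.picks j + 1))) (W.vlen j)
      ⟨0, Finset.mem_univ 0⟩
  exact ⟨g, fun i => hg i (Finset.mem_univ i)⟩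

/-- The vertical edge of aisle `j` of maximum length: the edge omitted by the `gap`
configuration (which leaves the largest section of the aisle unconnected). -/
noncomputable def gapIdx (j : Fin W.n) : Fin (W.picks j + 1) := (W.exists_gapIdx j).choose

theorem gapIdx_spec (j : Fin W.n) : ∀ i, W.vlen j i ≤ W.vlen j (W.gapIdx j) :=
  (W.exists_gapIdx j).choose_spec

/-- The multiplicity of the `i`-th vertical edge of aisle `j` in each of the six vertical
edge configurations. -/
noncomputable def vconfFun (j : Fin W.n) (c : VCName) (i : Fin (W.picks j + 1)) : ℕ :=
  match c with
  | .onepass => 1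
  | .top => if i.val < W.picks j then 2 else 0
  | .bottom => if 1 ≤ i.val then 2 else 0
  | .gap => if i = W.gapIdx j then 0 else 2
  | .twopass => 2
  | .none => 0

/-- A vertical edge configuration in aisle `j`, as a subgraph of `G`. -/
noncomputable def vcSub (j : Fin W.n) (c : VCName) : W.E → ℕ := fun e =>
  match e with
  | .inl ⟨i, x⟩ =>
      if h : i = j then W.vconfFun j c ⟨x.val, by exact h ▸ x.isLt⟩ else 0
  | .inr _ => 0

/-- A horizontal edge configuration between aisles `k` and `k+1`, as a subgraph of `G`. -/
def hcSub (k : Fin (W.n - 1)) (c : HCName) : W.E → ℕ := fun e =>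
  match e with
  | .inl _ => 0
  | .inr (.inl k') => if k' = k then hcA c else 0
  | .inr (.inr k') => if k' = k then hcB c else 0

end Warehouse

/-!
By Euler's theorem, a subgraph is a tour subgraph iff it covers `P`, has only even degrees, and
its vertices of positive degree are mutually reachable (a longest trail in an even graph is
closed, and if the graph is connected it uses every edge). A completion `C` of an `L_j` PTS lies
in `G − L_j`, so it meets `T₁` and `T₂` only at `a_j` and `b_j`. Away from these two vertices
every degree of `Tᵢ ∪ C` therefore comes from one side alone, and coverage and parity pass from
`T₁ ∪ C` to `T₂ ∪ C`; at `a_j` and `b_j` they pass because the degree classes agree. Every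
vertex of `T₂ ∪ C` reaches `a_j` or `b_j`, and these two are joined either inside `T₂` or, when
they lie in different components of `T₁`, inside `C`, since that is the only way `T₁ ∪ C` can
join them.
-/

namespace SimpleGraph

variable {V : Type*} {G G₁ G₂ H : SimpleGraph V} {S : Set V} {a b : V}

def SupportPreconnected (G : SimpleGraph V) : Prop :=
  ∀ v ∈ G.support, ∀ w ∈ G.support, G.Reachable v w

theorem Reachable.mem_support {u v : V} (h : G.Reachable u v) (hu : u ∈ G.support) :
    v ∈ G.support :=
  (eq_or_ne u v).elim (· ▸ hu) fun huv => mem_support_of_reachable huv.symm h.symm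

theorem Reachable.exists_exit_of_sup {x y : V} (hx : x ∈ H.support)
    (h : (G ⊔ H).Reachable x y) :
    H.Reachable x y ∨ ∃ p ∈ G.support, p ∈ H.support ∧ H.Reachable x p := by
  obtain ⟨w⟩ := h
  induction w with
  | nil => exact .inl .rfl
  | @cons x z y hxz _ ih =>
    rcases (sup_adj _ _ _ _).1 hxz with hG | hH
    · exact .inr ⟨x, ⟨z, hG⟩, hx, .rfl⟩
    · have hxz := hH.reachable
      rcases ih ⟨x, hH.symm⟩ with h | ⟨p, hpG, hpH, hzp⟩
      exacts [.inl (hxz.trans h), .inr ⟨p, hpG, hpH, hxz.trans hzp⟩]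

theorem Reachable.of_sup_of_not_reachable
    (hI : G.support ∩ H.support ⊆ {a, b}) (hG : ¬G.Reachable a b)
    (h : (G ⊔ H).Reachable a b) : H.Reachable a b := by
  by_contra hH
  suffices ∀ y, (G ⊔ H).Reachable a y → G.Reachable a y ∨ H.Reachable a y by
    rcases this b h with h | h <;> contradiction
  intro y hy
  rw [reachable_iff_reflTransGen] at hy
  induction hy with
  | refl => exact .inl .rfl
  | @tail y z _ hyz ih =>
    have hI' : y ∈ G.support → y ∈ H.support → y = a := fun hyG hyH =>
      (hI ⟨hyG, hyH⟩).resolve_right fun hyb => by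
        subst hyb; rcases ih with h | h <;> contradiction
    rcases (sup_adj _ _ _ _).1 hyz, ih with ⟨hG' | hH', hGy | hHy⟩
    · exact .inl (hGy.trans hG'.reachable)
    · obtain rfl : y = a := (eq_or_ne a y).elim Eq.symm fun hay =>
        hI' ⟨z, hG'⟩ (mem_support_of_reachable hay.symm hHy.symm)
      exact .inl hG'.reachable
    · obtain rfl : y = a := (eq_or_ne a y).elim Eq.symm fun hay =>
        hI' (mem_support_of_reachable hay.symm hGy.symm) ⟨z, hH'⟩
      exact .inr hH'.reachable
    · exact .inr (hHy.trans hH'.reachable)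

theorem mem_support_sup {v : V} : v ∈ (G ⊔ H).support ↔ v ∈ G.support ∨ v ∈ H.support := by
  simp only [mem_support, sup_adj, exists_or]

theorem reachable_sup_of_interface (hI : G₁.support ∩ H.support ⊆ {a, b})
    (ha : a ∈ G₁.support ↔ a ∈ G₂.support) (hb : b ∈ G₁.support ↔ b ∈ G₂.support)
    (hne : G₁.support.Nonempty)
    (h₁ : (G₁ ⊔ H).SupportPreconnected)
    (h₂ : ∀ v ∈ G₂.support, G₂.Reachable v a ∨ G₂.Reachable v b)
    (hab : a ∈ G₂.support → b ∈ G₂.support → G₂.Reachable a b ∨ ¬G₁.Reachable a b) :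
    (G₂ ⊔ H).SupportPreconnected := by
  have hsupp : ∀ p ∈ ({a, b} : Set V), p ∈ G₁.support → p ∈ G₂.support := by
    rintro p (rfl | rfl)
    exacts [ha.1, hb.1]
  have hexit : ∀ v ∈ (G₂ ⊔ H).support,
      ∃ p ∈ ({a, b} : Set V), p ∈ G₂.support ∧ (G₂ ⊔ H).Reachable v p := by
    intro v hv
    rcases mem_support_sup.1 hv with hv | hv
    · rcases h₂ v hv with h | h
      exacts [⟨a, .inl rfl, h.mem_support hv, h.mono le_sup_left⟩,
        ⟨b, .inr rfl, h.mem_support hv, h.mono le_sup_left⟩]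
    · obtain ⟨r, hr⟩ := hne
      have hvr := h₁ v (mem_support_sup.2 (.inr hv)) r (mem_support_sup.2 (.inl hr))
      rcases hvr.exists_exit_of_sup hv with h | ⟨p, hpG, hpH, hvp⟩
      · have hrI := hI ⟨hr, h.mem_support hv⟩
        exact ⟨r, hrI, hsupp r hrI hr, h.mono le_sup_right⟩
      · exact ⟨p, hI ⟨hpG, hpH⟩, hsupp p (hI ⟨hpG, hpH⟩) hpG, hvp.mono le_sup_right⟩
  have hab' : a ∈ G₂.support → b ∈ G₂.support → (G₂ ⊔ H).Reachable a b := fun ha₂ hb₂ =>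
    (hab ha₂ hb₂).elim (·.mono le_sup_left) fun hG => (Reachable.of_sup_of_not_reachable hI hG
      (h₁ a (mem_support_sup.2 (.inl (ha.2 ha₂))) b (mem_support_sup.2 (.inl (hb.2 hb₂))))).mono
        le_sup_right
  have hinterface : ∀ p ∈ ({a, b} : Set V), ∀ q ∈ ({a, b} : Set V),
      p ∈ G₂.support → q ∈ G₂.support → (G₂ ⊔ H).Reachable p q := by
    rintro p (rfl | rfl) q (rfl | rfl) hp hq
    exacts [.rfl, hab' hp hq, (hab' hq hp).symm, .rfl]
  intro v hv w hw
  obtain ⟨p, hp, hp₂, hvp⟩ := hexit v hv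
  obtain ⟨q, hq, hq₂, hwq⟩ := hexit w hw
  exact hvp.trans ((hinterface p hp q hq hp₂ hq₂).trans hwq.symm)

theorem reachable_of_induce {v w : S} (h : (G.induce S).Reachable v w) : G.Reachable v w :=
  h.map (Embedding.induce S).toHom

theorem eq_empty_of_card_connectedComponent_induce_eq_zero [Finite V]
    (h : Nat.card (G.induce S).ConnectedComponent = 0) : S = ∅ :=
  Set.eq_empty_of_forall_notMem fun v hv =>
    have : Nonempty (G.induce S).ConnectedComponent := ⟨(G.induce S).connectedComponentMk ⟨v, hv⟩⟩
    Nat.card_pos.ne' h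

theorem reachable_of_card_connectedComponent_induce_eq_one
    (h : Nat.card (G.induce S).ConnectedComponent = 1) {v w : V} (hv : v ∈ S) (hw : w ∈ S) :
    G.Reachable v w :=
  have := (Nat.card_eq_one_iff_unique.1 h).1
  reachable_of_induce (ConnectedComponent.eq.1 (Subsingleton.elim
    ((G.induce S).connectedComponentMk ⟨v, hv⟩) ((G.induce S).connectedComponentMk ⟨w, hw⟩)))

theorem reachable_or_reachable_of_card_connectedComponent_induce_eq_two
    (h : Nat.card (G.induce S).ConnectedComponent = 2) (ha : a ∈ S) (hb : b ∈ S)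
    (hab : ¬G.Reachable a b) {v : V} (hv : v ∈ S) : G.Reachable v a ∨ G.Reachable v b := by
  let c : S → (G.induce S).ConnectedComponent := (G.induce S).connectedComponentMk
  obtain ⟨y, -, hy⟩ := (Nat.card_eq_two_iff' (c ⟨a, ha⟩)).1 h
  have hb' : c ⟨b, hb⟩ = y :=
    hy _ fun h => hab (reachable_of_induce (ConnectedComponent.eq.1 h.symm))
  by_cases hva : c ⟨v, hv⟩ = c ⟨a, ha⟩
  · exact .inl (reachable_of_induce (ConnectedComponent.eq.1 hva))
  · exact .inr (reachable_of_induce (ConnectedComponent.eq.1 ((hy _ hva).trans hb'.symm)))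

end SimpleGraph

theorem pos_iff_pos_of_degClass_eq {d₁ d₂ : ℕ} (h : degClass d₁ = degClass d₂) :
    0 < d₁ ↔ 0 < d₂ := by
  unfold degClass at h
  split_ifs at h <;> omega

theorem even_iff_even_of_degClass_eq {d₁ d₂ : ℕ} (h : degClass d₁ = degClass d₂) :
    Even d₁ ↔ Even d₂ := by
  unfold degClass at h
  simp only [Nat.even_iff]
  split_ifs at h <;> omega

namespace Warehouse

variable {W : Warehouse}

theorem ends_fst_ne_snd (e : W.E) : (W.ends e).1 ≠ (W.ends e).2 := by
  rcases e with ⟨j, i⟩ | k | k <;> intro h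
  · simpa [ends, Fin.ext_iff] using congrArg (fun v : W.V => v.2.val) h
  · simpa [ends, aV, leftAisle, rightAisle, Fin.ext_iff] using congrArg (fun v : W.V => v.1.val) h
  · simpa [ends, bV, leftAisle, rightAisle, Fin.ext_iff] using congrArg (fun v : W.V => v.1.val) h

theorem deg_add (T C : W.E → ℕ) (v : W.V) :
    W.deg (fun e => T e + C e) v = W.deg T v + W.deg C v := by
  simp only [deg, add_mul, Finset.sum_add_distrib]

theorem deg_mono {S T : W.E → ℕ} (h : ∀ e, S e ≤ T e) (v : W.V) : W.deg S v ≤ W.deg T v :=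
  Finset.sum_le_sum fun e _ => Nat.mul_le_mul_right _ (h e)

theorem deg_pos_iff {T : W.E → ℕ} {v : W.V} :
    0 < W.deg T v ↔ ∃ e, 0 < T e ∧ ((W.ends e).1 = v ∨ (W.ends e).2 = v) := by
  simp only [deg, Finset.sum_pos_iff, Finset.mem_univ, true_and]
  refine exists_congr fun e => ?_
  by_cases h1 : (W.ends e).1 = v <;> by_cases h2 : (W.ends e).2 = v <;> simp [h1, h2]

theorem exists_lt_of_deg_lt {S T : W.E → ℕ} {v : W.V} (h : W.deg S v < W.deg T v) :
    ∃ e, S e < T e ∧ ((W.ends e).1 = v ∨ (W.ends e).2 = v) := by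
  obtain ⟨e, -, he⟩ := Finset.exists_lt_of_sum_lt h
  refine ⟨e, lt_of_mul_lt_mul_right he (Nat.zero_le _), ?_⟩
  by_contra! hv
  simp [hv.1, hv.2] at he

theorem mem_support_sgraph {T : W.E → ℕ} {v : W.V} :
    v ∈ (W.sgraph T).support ↔ 0 < W.deg T v := by
  rw [deg_pos_iff]
  constructor
  · rintro ⟨w, -, e, he, h | h⟩
    exacts [⟨e, he, .inl h.1⟩, ⟨e, he, .inr h.2⟩]
  · rintro ⟨e, he, h | h⟩
    · exact ⟨(W.ends e).2, h ▸ ends_fst_ne_snd e, e, he, .inl ⟨h, rfl⟩⟩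
    · exact ⟨(W.ends e).1, h ▸ (ends_fst_ne_snd e).symm, e, he, .inr ⟨rfl, h⟩⟩

theorem sgraph_add (T C : W.E → ℕ) :
    W.sgraph (fun e => T e + C e) = W.sgraph T ⊔ W.sgraph C := by
  ext v w
  simp only [SimpleGraph.sup_adj, sgraph, Nat.add_pos_iff_pos_or_pos, or_and_right,
    exists_or, and_or_left, or_or_or_comm]

theorem exists_edge_of_sgraph_adj {T : W.E → ℕ} {v w : W.V} (h : (W.sgraph T).Adj v w) :
    ∃ e, 0 < T e ∧ ((W.ends e).1 = v ∨ (W.ends e).2 = v) ∧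
      ((W.ends e).1 = w ∨ (W.ends e).2 = w) := by
  obtain ⟨-, e, he, h | h⟩ := h
  exacts [⟨e, he, .inl h.1, .inr h.2⟩, ⟨e, he, .inr h.2, .inl h.1⟩]

theorem sgraph_adj_ends {T : W.E → ℕ} {e : W.E} (he : 0 < T e) :
    (W.sgraph T).Adj (W.ends e).1 (W.ends e).2 :=
  ⟨ends_fst_ne_snd e, e, he, .inl ⟨rfl, rfl⟩⟩

/-! ### Euler's criterion -/

def IsWalk (l : List (W.E × Bool)) : Prop := l.IsChain fun s t => W.stepDst s = W.stepSrc t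

def walkCount (l : List (W.E × Bool)) (e : W.E) : ℕ := (l.map Prod.fst).count e

theorem walkCount_perm {l l' : List (W.E × Bool)} (h : l.Perm l') : walkCount l = walkCount l' :=
  funext fun e => (h.map Prod.fst).count_eq e

theorem walkCount_cons (s : W.E × Bool) (l : List (W.E × Bool)) :
    walkCount (s :: l) = fun e => walkCount l e + if s.1 = e then 1 else 0 := by
  funext e
  simp [walkCount, List.count_cons]

theorem deg_walkCount (l : List (W.E × Bool)) (v : W.V) :
    W.deg (walkCount l) v = (l.map W.stepSrc).count v + (l.map W.stepDst).count v := by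
  induction l with
  | nil => simp [deg, walkCount]
  | cons s l ih =>
    have hs : W.deg (fun e => if s.1 = e then 1 else 0) v =
        (if W.stepSrc s = v then 1 else 0) + if W.stepDst s = v then 1 else 0 := by
      obtain ⟨e, _ | _⟩ := s <;> simp [deg, stepSrc, stepDst, add_comm]
    rw [walkCount_cons, deg_add, ih, hs]
    simp only [List.map_cons, List.count_cons, beq_iff_eq]
    ring

theorem IsWalk.map_stepDst {s : W.E × Bool} {l : List (W.E × Bool)} (h : IsWalk (s :: l)) :
    (s :: l).map W.stepDst = l.map W.stepSrc ++ [W.stepDst ((s :: l).getLast (by simp))] := by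
  induction l generalizing s with
  | nil => simp
  | cons t l ih =>
    obtain ⟨hst, h⟩ := List.isChain_cons_cons.1 h
    rw [List.map_cons, ih h, List.getLast_cons (List.cons_ne_nil t l), hst]
    rfl

theorem IsWalk.odd_deg_stepDst_getLast {s : W.E × Bool} {l : List (W.E × Bool)}
    (h : IsWalk (s :: l)) (hopen : W.stepDst ((s :: l).getLast (by simp)) ≠ W.stepSrc s) :
    Odd (W.deg (walkCount (s :: l)) (W.stepDst ((s :: l).getLast (by simp)))) := by
  rw [deg_walkCount, h.map_stepDst]
  simp only [List.map_cons, List.count_cons, List.count_append, List.count_nil,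
    beq_iff_eq, if_pos, if_neg (Ne.symm hopen)]
  exact ⟨_, by ring⟩

theorem isClosedWalk_iff (l : List (W.E × Bool)) : W.IsClosedWalk l ↔
    IsWalk l ∧ ∀ s ∈ l.head?, ∀ t ∈ l.getLast?, W.stepDst t = W.stepSrc s :=
  Iff.rfl

theorem isClosedWalk_cons_iff {s : W.E × Bool} {l : List (W.E × Bool)} :
    W.IsClosedWalk (s :: l) ↔
      IsWalk (s :: l) ∧ W.stepDst ((s :: l).getLast (by simp)) = W.stepSrc s := by
  simp [isClosedWalk_iff, List.getLast?_eq_some_getLast]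

theorem IsClosedWalk.isWalk {l : List (W.E × Bool)} (h : W.IsClosedWalk l) : IsWalk l := h.1

theorem IsClosedWalk.count_map_stepDst {l : List (W.E × Bool)} (h : W.IsClosedWalk l)
    (v : W.V) : (l.map W.stepDst).count v = (l.map W.stepSrc).count v := by
  obtain _ | ⟨s, l⟩ := l
  · rfl
  · rw [h.isWalk.map_stepDst, (isClosedWalk_cons_iff.1 h).2]
    exact (List.perm_append_singleton _ _).count_eq v

theorem IsClosedWalk.even_deg {l : List (W.E × Bool)} (h : W.IsClosedWalk l) (v : W.V) :
    Even (W.deg (walkCount l) v) := by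
  rw [deg_walkCount, h.count_map_stepDst]
  exact ⟨_, rfl⟩

theorem IsClosedWalk.mem_map_stepSrc {l : List (W.E × Bool)} (h : W.IsClosedWalk l) {v : W.V}
    (hv : 0 < W.deg (walkCount l) v) : v ∈ l.map W.stepSrc := by
  rw [deg_walkCount, h.count_map_stepDst] at hv
  exact List.count_pos_iff.1 (by omega)

theorem reachable_stepSrc_stepDst {T : W.E → ℕ} {s : W.E × Bool} (h : 0 < T s.1) :
    (W.sgraph T).Reachable (W.stepSrc s) (W.stepDst s) := by
  obtain ⟨e, _ | _⟩ := s
  · exact (sgraph_adj_ends h).symm.reachable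
  · exact (sgraph_adj_ends h).reachable

theorem IsWalk.reachable_stepSrc {T : W.E → ℕ} {s : W.E × Bool} {l : List (W.E × Bool)}
    (h : IsWalk (s :: l)) (hT : ∀ u ∈ s :: l, 0 < T u.1) :
    ∀ u ∈ s :: l, (W.sgraph T).Reachable (W.stepSrc s) (W.stepSrc u) := by
  induction l generalizing s with
  | nil => simp
  | cons t l ih =>
    obtain ⟨hst, h⟩ := List.isChain_cons_cons.1 h
    have hs_t : (W.sgraph T).Reachable (W.stepSrc s) (W.stepSrc t) :=
      hst ▸ reachable_stepSrc_stepDst (hT s (by simp))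
    rintro u (_ | ⟨_, hu⟩)
    · rfl
    · exact hs_t.trans (ih h (fun u hu => hT u (.tail _ hu)) u hu)

theorem isClosedWalk_iff_cycle_chain (l : List (W.E × Bool)) :
    W.IsClosedWalk l ↔ Cycle.Chain (fun s t => W.stepDst s = W.stepSrc t) (l : Cycle _) := by
  obtain _ | ⟨s, l⟩ := l
  · simp [isClosedWalk_iff, IsWalk]
  · rw [Cycle.chain_coe_cons, ← List.cons_append, List.isChain_append, isClosedWalk_cons_iff]
    simp [IsWalk, List.getLast?_eq_some_getLast]

theorem IsClosedWalk.append_comm {l₁ l₂ : List (W.E × Bool)} (h : W.IsClosedWalk (l₁ ++ l₂)) :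
    W.IsClosedWalk (l₂ ++ l₁) := by
  rw [isClosedWalk_iff_cycle_chain] at h ⊢
  rwa [Cycle.coe_eq_coe.2 List.isRotated_append]

def IsTrail (T : W.E → ℕ) (l : List (W.E × Bool)) : Prop :=
  IsWalk l ∧ ∀ e, walkCount l e ≤ T e

theorem length_eq_sum_walkCount (l : List (W.E × Bool)) : l.length = ∑ e, walkCount l e := by
  have := Multiset.sum_count_eq_card (s := Finset.univ) (m := (l.map Prod.fst : Multiset W.E))
    (fun _ _ => Finset.mem_univ _)
  simpa [walkCount] using this.symm

theorem IsTrail.length_le {T : W.E → ℕ} {l : List (W.E × Bool)} (h : IsTrail T l) :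
    l.length ≤ ∑ e, T e :=
  length_eq_sum_walkCount l ▸ Finset.sum_le_sum fun e _ => h.2 e

theorem exists_maximal_trail (T : W.E → ℕ) :
    ∃ l, IsTrail T l ∧ ∀ l', IsTrail T l' → l'.length ≤ l.length := by
  let lengths := {n | ∃ l, IsTrail T l ∧ l.length = n}
  have hne : lengths.Nonempty := ⟨0, [], ⟨List.isChain_nil, fun e => Nat.zero_le _⟩, rfl⟩
  have hbdd : BddAbove lengths := ⟨∑ e, T e, by rintro _ ⟨l, hl, rfl⟩; exact hl.length_le⟩
  obtain ⟨l, hl, hlen⟩ := Nat.sSup_mem hne hbdd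
  exact ⟨l, hl, fun l' hl' => hlen ▸ le_csSup hbdd ⟨l', hl', rfl⟩⟩

theorem IsTrail.append_singleton {T : W.E → ℕ} {l : List (W.E × Bool)} (h : IsTrail T l)
    {s : W.E × Bool} (hs : ∀ u ∈ l.getLast?, W.stepDst u = W.stepSrc s)
    (hlt : walkCount l s.1 < T s.1) : IsTrail T (l ++ [s]) := by
  refine ⟨List.isChain_append.2 ⟨h.1, List.isChain_singleton s, fun u hu t ht => ?_⟩, fun e => ?_⟩
  · obtain rfl : t = s := by simpa using ht.symm
    exact hs u hu
  · have := h.2 e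
    simp only [walkCount, List.map_append, List.count_append, List.map_cons, List.map_nil,
      List.count_singleton, beq_iff_eq] at this hlt ⊢
    split_ifs with he
    · exact he ▸ hlt
    · exact this

theorem exists_stepSrc_eq {e : W.E} {v : W.V} (h : (W.ends e).1 = v ∨ (W.ends e).2 = v) :
    ∃ s : W.E × Bool, s.1 = e ∧ W.stepSrc s = v := by
  rcases h with h | h
  exacts [⟨(e, true), rfl, h⟩, ⟨(e, false), rfl, h⟩]

theorem IsTrail.isClosedWalk_of_maximal {T : W.E → ℕ} (heven : ∀ v, Even (W.deg T v))
    {l : List (W.E × Bool)} (hl : IsTrail T l)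
    (hmax : ∀ l', IsTrail T l' → l'.length ≤ l.length) : W.IsClosedWalk l := by
  obtain _ | ⟨s, l⟩ := l
  · simp [isClosedWalk_iff, IsWalk]
  refine isClosedWalk_cons_iff.2 ⟨hl.1, ?_⟩
  -- an open trail has odd degree at its end, where `T` has even degree: an edge is left over
  by_contra hopen
  have hodd := hl.1.odd_deg_stepDst_getLast hopen
  have hlt := (deg_mono hl.2 _).lt_of_ne fun h => Nat.not_even_iff_odd.2 (h ▸ hodd) (heven _)
  obtain ⟨e, he, hend⟩ := exists_lt_of_deg_lt hlt
  obtain ⟨s', rfl, hs'⟩ := exists_stepSrc_eq hend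
  have hlonger :=
    hmax _ (hl.append_singleton (s := s') (by simp [List.getLast?_eq_some_getLast, hs']) he)
  simp at hlonger

theorem exists_edge_lt_at_support {S T : W.E → ℕ} (hST : ∀ e, S e ≤ T e)
    (hconn : (W.sgraph T).SupportPreconnected)
    {x₀ : W.V} (hx₀ : 0 < W.deg S x₀) {f : W.E} (hf : S f < T f) :
    ∃ e x, S e < T e ∧ ((W.ends e).1 = x ∨ (W.ends e).2 = x) ∧ 0 < W.deg S x := by
  by_cases hw : 0 < W.deg S (W.ends f).1
  · exact ⟨f, _, hf, .inl rfl, hw⟩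
  obtain ⟨p⟩ := hconn x₀ (mem_support_sgraph.2 (hx₀.trans_le (deg_mono hST x₀))) (W.ends f).1
    (mem_support_sgraph.2 (deg_pos_iff.2 ⟨f, by omega, .inl rfl⟩))
  obtain ⟨d, -, hd₁, hd₂⟩ := p.exists_boundary_dart {x | 0 < W.deg S x} hx₀ hw
  obtain ⟨e, he, hfst, hsnd⟩ := exists_edge_of_sgraph_adj d.adj
  have hSe : S e = 0 := by
    by_contra h
    exact hd₂ (deg_pos_iff.2 ⟨e, Nat.pos_of_ne_zero h, hsnd⟩)
  exact ⟨e, d.fst, by omega, hfst, hd₁⟩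

theorem IsTrail.walkCount_eq_of_maximal {T : W.E → ℕ} (heven : ∀ v, Even (W.deg T v))
    (hconn : (W.sgraph T).SupportPreconnected)
    {l : List (W.E × Bool)} (hl : IsTrail T l)
    (hmax : ∀ l', IsTrail T l' → l'.length ≤ l.length) : walkCount l = T := by
  by_contra hne
  obtain ⟨f, hf⟩ : ∃ f, walkCount l f < T f := by
    by_contra! h
    exact hne (funext fun e => (hl.2 e).antisymm (h e))
  have hclosed := hl.isClosedWalk_of_maximal heven hmax
  obtain _ | ⟨s₀, l₀⟩ := l
  · have hlonger := hmax _ (hl.append_singleton (s := (f, true)) (by simp) hf)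
    simp at hlonger
  have hx₀ : 0 < W.deg (walkCount (s₀ :: l₀)) (W.stepSrc s₀) := by simp [deg_walkCount]
  obtain ⟨e, x, he, hex, hx⟩ := exists_edge_lt_at_support hl.2 hconn hx₀ hf
  -- rotate the closed trail to start at `x`, then extend it by the unused edge `e` at `x`
  obtain ⟨u, hu, rfl⟩ := List.mem_map.1 (hclosed.mem_map_stepSrc hx)
  obtain ⟨l₁, l₂, hsplit⟩ := List.append_of_mem hu
  rw [hsplit] at hclosed hl hmax he
  have hrot : W.IsClosedWalk (u :: l₂ ++ l₁) := hclosed.append_comm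
  have hperm : (u :: l₂ ++ l₁).Perm (l₁ ++ u :: l₂) := List.perm_append_comm
  have hrot_trail : IsTrail T (u :: l₂ ++ l₁) := ⟨hrot.isWalk, walkCount_perm hperm ▸ hl.2⟩
  obtain ⟨s, rfl, hs⟩ := exists_stepSrc_eq hex
  have hlonger := hmax _ (hrot_trail.append_singleton (s := s)
    (by simpa [List.getLast?_eq_some_getLast, hs] using (isClosedWalk_cons_iff.1 hrot).2)
    (walkCount_perm hperm ▸ he))
  simp at hlonger
  omega

theorem exists_closedWalk_iff (T : W.E → ℕ) :
    (∃ l, W.IsClosedWalk l ∧ walkCount l = T) ↔ (∀ v, Even (W.deg T v)) ∧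
      (W.sgraph T).SupportPreconnected := by
  constructor
  · rintro ⟨l, hl, rfl⟩
    refine ⟨hl.even_deg, fun v hv w hw => ?_⟩
    rw [mem_support_sgraph] at hv hw
    obtain ⟨u, hu, rfl⟩ := List.mem_map.1 (hl.mem_map_stepSrc hv)
    obtain ⟨u', hu', rfl⟩ := List.mem_map.1 (hl.mem_map_stepSrc hw)
    obtain _ | ⟨s, l⟩ := l
    · simp at hu
    have hpos : ∀ u ∈ s :: l, 0 < walkCount (s :: l) u.1 :=
      fun u hu => List.count_pos_iff.2 (List.mem_map_of_mem hu)
    exact (hl.isWalk.reachable_stepSrc hpos u hu).symm.trans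
      (hl.isWalk.reachable_stepSrc hpos u' hu')
  · rintro ⟨heven, hconn⟩
    obtain ⟨l, hl, hmax⟩ := exists_maximal_trail T
    exact ⟨l, hl.isClosedWalk_of_maximal heven hmax, hl.walkCount_eq_of_maximal heven hconn hmax⟩

theorem isTour_iff (T : W.E → ℕ) : W.IsTour T ↔
    W.IsSub T ∧ (∀ v, W.Required v → 0 < W.deg T v) ∧ (∀ v, Even (W.deg T v)) ∧
      (W.sgraph T).SupportPreconnected := by
  simp only [IsTour, ← exists_closedWalk_iff, funext_iff, walkCount]

/-! ### Transfer across the interface `{a_j, b_j}` -/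

theorem aisle_le_of_mem_edgesUpTo {j : Fin W.n} {e : W.E}
    (he : e ∈ W.edgesUpTo (j.val + 1) j.val) {v : W.V}
    (hv : (W.ends e).1 = v ∨ (W.ends e).2 = v) : v.1.val ≤ j.val := by
  match e, he with
  | .inl ⟨i, x⟩, (he : i.val < j.val + 1) =>
    rcases hv with rfl | rfl <;> simp [ends] <;> omega
  | .inr (.inl k), (he : k.val < j.val) =>
    rcases hv with rfl | rfl <;> simp [ends, aV, leftAisle, rightAisle] <;> omega
  | .inr (.inr k), (he : k.val < j.val) =>
    rcases hv with rfl | rfl <;> simp [ends, bV, leftAisle, rightAisle] <;> omega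

theorem eq_aV_or_eq_bV_of_notMem_edgesUpTo {j : Fin W.n} {e : W.E}
    (he : e ∉ W.edgesUpTo (j.val + 1) j.val) {v : W.V}
    (hv : (W.ends e).1 = v ∨ (W.ends e).2 = v) (hvj : v.1.val ≤ j.val) :
    v = W.aV j ∨ v = W.bV j := by
  match e, he with
  | .inl ⟨i, x⟩, (he : ¬i.val < j.val + 1) =>
    rcases hv with rfl | rfl <;> simp [ends] at hvj <;> omega
  | .inr (.inl k), (he : ¬k.val < j.val) =>
    rcases hv with rfl | rfl
    · have hk : W.leftAisle k = j := Fin.ext (by simp [ends, aV, leftAisle] at hvj ⊢; omega)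
      exact .inl (by simp only [ends, hk])
    · simp [ends, aV, rightAisle] at hvj
      omega
  | .inr (.inr k), (he : ¬k.val < j.val) =>
    rcases hv with rfl | rfl
    · have hk : W.leftAisle k = j := Fin.ext (by simp [ends, bV, leftAisle] at hvj ⊢; omega)
      exact .inr (by simp only [ends, hk])
    · simp [ends, bV, rightAisle] at hvj
      omega

theorem support_inter_subset {j : Fin W.n} {T C : W.E → ℕ}
    (hT : ∀ e ∉ W.edgesUpTo (j.val + 1) j.val, T e = 0)
    (hC : ∀ e ∈ W.edgesUpTo (j.val + 1) j.val, C e = 0) :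
    (W.sgraph T).support ∩ (W.sgraph C).support ⊆ {W.aV j, W.bV j} := by
  rintro v ⟨hvT, hvC⟩
  obtain ⟨e, he, hev⟩ := deg_pos_iff.1 (mem_support_sgraph.1 hvT)
  obtain ⟨f, hf, hfv⟩ := deg_pos_iff.1 (mem_support_sgraph.1 hvC)
  have heL : e ∈ W.edgesUpTo (j.val + 1) j.val := by_contra fun h => he.ne' (hT e h)
  have hfL : f ∉ W.edgesUpTo (j.val + 1) j.val := fun h => hf.ne' (hC f h)
  exact eq_aV_or_eq_bV_of_notMem_edgesUpTo hfL hfv (aisle_le_of_mem_edgesUpTo heL hev)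

theorem deg_eq_zero_or_deg_eq_zero {T C : W.E → ℕ} {s : Set W.V}
    (hI : (W.sgraph T).support ∩ (W.sgraph C).support ⊆ s) {v : W.V} (hv : v ∉ s) :
    W.deg T v = 0 ∨ W.deg C v = 0 := by
  by_contra! h
  exact hv (hI ⟨mem_support_sgraph.2 (Nat.pos_of_ne_zero h.1),
    mem_support_sgraph.2 (Nat.pos_of_ne_zero h.2)⟩)

theorem deg_add_pos_of_interface {T₁ T₂ C C₂ : W.E → ℕ} {s : Set W.V}
    (hI : (W.sgraph T₁).support ∩ (W.sgraph C₂).support ⊆ s)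
    (hs : ∀ p ∈ s, 0 < W.deg T₁ p → 0 < W.deg T₂ p) {v : W.V}
    (h₁ : 0 < W.deg (fun e => T₁ e + C e) v) (h₂ : 0 < W.deg (fun e => T₂ e + C₂ e) v) :
    0 < W.deg (fun e => T₂ e + C e) v := by
  rw [deg_add] at h₁ h₂ ⊢
  by_cases hv : v ∈ s
  · rcases Nat.eq_zero_or_pos (W.deg C v) with hC | hC
    · have := hs v hv (by omega)
      omega
    · omega
  · have := deg_eq_zero_or_deg_eq_zero hI hv
    omega

theorem even_deg_add_of_interface {T₁ T₂ C C₂ : W.E → ℕ} {s : Set W.V}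
    (hI₁ : (W.sgraph T₁).support ∩ (W.sgraph C).support ⊆ s)
    (hI₂ : (W.sgraph T₂).support ∩ (W.sgraph C).support ⊆ s)
    (hI₂' : (W.sgraph T₂).support ∩ (W.sgraph C₂).support ⊆ s)
    (hs : ∀ p ∈ s, Even (W.deg T₁ p) ↔ Even (W.deg T₂ p)) {v : W.V}
    (h₁ : Even (W.deg (fun e => T₁ e + C e) v)) (h₂ : Even (W.deg (fun e => T₂ e + C₂ e) v)) :
    Even (W.deg (fun e => T₂ e + C e) v) := by
  rw [deg_add, Nat.even_add] at h₁ h₂ ⊢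
  by_cases hv : v ∈ s
  · rwa [← hs v hv]
  rcases deg_eq_zero_or_deg_eq_zero hI₂ hv with hT₂ | hC
  · rcases deg_eq_zero_or_deg_eq_zero hI₁ hv with hT₁ | hC <;> simp_all
  · rcases deg_eq_zero_or_deg_eq_zero hI₂' hv with hT₂ | hC₂ <;> simp_all

def SameConnectivity (T₁ T₂ : W.E → ℕ) (a b : W.V) : Prop :=
  (W.numComp T₁ = 1 ∧ W.numComp T₂ = 1 ∧ (0 < W.deg T₁ a ∨ 0 < W.deg T₁ b) ∧
      (0 < W.deg T₂ a ∨ 0 < W.deg T₂ b)) ∨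
    (W.numComp T₁ = 2 ∧ W.numComp T₂ = 2 ∧ W.SepComp T₁ a b ∧ W.SepComp T₂ a b)

theorem SameConnectivity.symm {T₁ T₂ : W.E → ℕ} {a b : W.V} (h : SameConnectivity T₁ T₂ a b) :
    SameConnectivity T₂ T₁ a b :=
  h.imp (fun ⟨h₁, h₂, h₃, h₄⟩ => ⟨h₂, h₁, h₄, h₃⟩) fun ⟨h₁, h₂, h₃, h₄⟩ => ⟨h₂, h₁, h₄, h₃⟩

theorem reachable_add_of_sameConnectivity {T₁ T₂ C : W.E → ℕ} {a b : W.V}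
    (hI : (W.sgraph T₁).support ∩ (W.sgraph C).support ⊆ {a, b})
    (ha : 0 < W.deg T₁ a ↔ 0 < W.deg T₂ a) (hb : 0 < W.deg T₁ b ↔ 0 < W.deg T₂ b)
    (hsame : SameConnectivity T₁ T₂ a b)
    (h₁ : (W.sgraph fun e => T₁ e + C e).SupportPreconnected) :
    (W.sgraph fun e => T₂ e + C e).SupportPreconnected := by
  rw [sgraph_add] at h₁ ⊢
  simp only [← mem_support_sgraph] at ha hb
  rcases hsame with ⟨-, h₂, hpos₁, hpos₂⟩ | ⟨-, h₂, hsep₁, hsep₂⟩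
  · have hconn₂ : (W.sgraph T₂).SupportPreconnected := fun v hv w hw =>
      SimpleGraph.reachable_of_card_connectedComponent_induce_eq_one h₂
        (mem_support_sgraph.1 hv) (mem_support_sgraph.1 hw)
    refine SimpleGraph.reachable_sup_of_interface hI ha hb ?_ h₁ ?_
      fun ha₂ hb₂ => .inl (hconn₂ _ ha₂ _ hb₂)
    · rcases hpos₁ with h | h
      exacts [⟨a, mem_support_sgraph.2 h⟩, ⟨b, mem_support_sgraph.2 h⟩]
    · intro v hv
      rcases hpos₂ with h | h
      exacts [.inl (hconn₂ _ hv _ (mem_support_sgraph.2 h)),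
        .inr (hconn₂ _ hv _ (mem_support_sgraph.2 h))]
  · exact SimpleGraph.reachable_sup_of_interface hI ha hb ⟨a, mem_support_sgraph.2 hsep₁.1⟩ h₁
      (fun v hv => SimpleGraph.reachable_or_reachable_of_card_connectedComponent_induce_eq_two h₂
        hsep₂.1 hsep₂.2.1 hsep₂.2.2 (mem_support_sgraph.1 hv))
      fun _ _ => .inr hsep₁.2.2

theorem isTour_add_of_isTour_add {j : Fin W.n} {T₁ T₂ C : W.E → ℕ}
    (hT₁ : ∀ e ∉ W.edgesUpTo (j.val + 1) j.val, T₁ e = 0)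
    (hT₂ : W.IsPTS (W.edgesUpTo (j.val + 1) j.val) T₂)
    (hC : W.IsSub C) (hCL : ∀ e ∈ W.edgesUpTo (j.val + 1) j.val, C e = 0)
    (hda : degClass (W.deg T₁ (W.aV j)) = degClass (W.deg T₂ (W.aV j)))
    (hdb : degClass (W.deg T₁ (W.bV j)) = degClass (W.deg T₂ (W.bV j)))
    (hsame : SameConnectivity T₁ T₂ (W.aV j) (W.bV j)) (h : W.IsTour (fun e => T₁ e + C e)) :
    W.IsTour (fun e => T₂ e + C e) := by
  obtain ⟨hsub₂, hT₂L, C₂, -, hC₂L, htour₂⟩ := hT₂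
  rw [isTour_iff] at h htour₂ ⊢
  obtain ⟨-, hreq₁, heven₁, hconn₁⟩ := h
  obtain ⟨-, hreq₂, heven₂, -⟩ := htour₂
  have hclass : ∀ p ∈ ({W.aV j, W.bV j} : Set W.V),
      degClass (W.deg T₁ p) = degClass (W.deg T₂ p) := by
    rintro p (rfl | rfl)
    exacts [hda, hdb]
  refine ⟨fun e => ?_, fun v hv => ?_, fun v => ?_, ?_⟩
  · by_cases he : e ∈ W.edgesUpTo (j.val + 1) j.val
    · simpa [hCL e he] using hsub₂ e
    · simpa [hT₂L e he] using hC e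
  · exact deg_add_pos_of_interface (support_inter_subset hT₁ hC₂L)
      (fun p hp => (pos_iff_pos_of_degClass_eq (hclass p hp)).1) (hreq₁ v hv) (hreq₂ v hv)
  · exact even_deg_add_of_interface (support_inter_subset hT₁ hCL) (support_inter_subset hT₂L hCL)
      (support_inter_subset hT₂L hC₂L) (fun p hp => even_iff_even_of_degClass_eq (hclass p hp))
      (heven₁ v) (heven₂ v)
  · exact reachable_add_of_sameConnectivity (support_inter_subset hT₁ hCL)
      (pos_iff_pos_of_degClass_eq hda) (pos_iff_pos_of_degClass_eq hdb) hsame hconn₁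

theorem eq_zero_of_numComp_eq_zero {T : W.E → ℕ} (h : W.numComp T = 0) : T = 0 := by
  funext e
  by_contra he
  have hv : 0 < W.deg T (W.ends e).1 := deg_pos_iff.2 ⟨e, Nat.pos_of_ne_zero he, .inl rfl⟩
  exact (Set.eq_empty_iff_forall_notMem.1
    (SimpleGraph.eq_empty_of_card_connectedComponent_induce_eq_zero h)) _ hv

end Warehouse

/-- Lemma 2 of Ratliff–Rosenthal: two `L_j` PTSs with the same degree
parities at `a_j`, `b_j` and matching connectivity structure are equivalent: any
completion of one completes the other. -/
theorem stmt1 (W : Warehouse) (j : Fin W.n)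
    (T₁ T₂ : W.E → ℕ)
    (h₁ : W.IsPTS (W.edgesUpTo (j.val + 1) j.val) T₁)
    (h₂ : W.IsPTS (W.edgesUpTo (j.val + 1) j.val) T₂)
    (hda : degClass (W.deg T₁ (W.aV j)) = degClass (W.deg T₂ (W.aV j)))
    (hdb : degClass (W.deg T₁ (W.bV j)) = degClass (W.deg T₂ (W.bV j)))
    (hcc : (W.numComp T₁ = 0 ∧ W.numComp T₂ = 0) ∨
           (W.numComp T₁ = 1 ∧ W.numComp T₂ = 1 ∧
             (0 < W.deg T₁ (W.aV j) ∨ 0 < W.deg T₁ (W.bV j)) ∧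
             (0 < W.deg T₂ (W.aV j) ∨ 0 < W.deg T₂ (W.bV j))) ∨
           (W.numComp T₁ = 2 ∧ W.numComp T₂ = 2 ∧
             W.SepComp T₁ (W.aV j) (W.bV j) ∧ W.SepComp T₂ (W.aV j) (W.bV j))) :
    W.EquivPTS (W.edgesUpTo (j.val + 1) j.val) T₁ T₂ := by
  intro C hC hCL
  rcases hcc with ⟨h0₁, h0₂⟩ | (hsame : Warehouse.SameConnectivity T₁ T₂ _ _)
  · rw [Warehouse.eq_zero_of_numComp_eq_zero h0₁, Warehouse.eq_zero_of_numComp_eq_zero h0₂]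
  · exact ⟨Warehouse.isTour_add_of_isTour_add h₁.2.1 h₂ hC hCL hda hdb hsame,
      Warehouse.isTour_add_of_isTour_add h₂.2.1 h₁ hC hCL hda.symm hdb.symm hsame.symm⟩
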